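/- For the symplectic form Ω_ν with ν ≠ 0 and a velocity field satisfying the Navier–Stokes equations with ∇×w not identically a gradient, the 1-form i_{∂_t+v}(Ω_ν) = (∇φ − ν∇×w)·(dx − v dt) is in general not closed; in particular if ν(∇×(∇×w)) ≠ 0 at some point then d(i_{∂_t+v}Ω_ν) ≠ 0, so ∂_t + v is not locally Hamiltonian. -/

import Mathlib

noncomputable section

/-- Points of `I × M ⊆ ℝ × ℝ³`, as `ℝ⁴` with coordinates `0,1,2` spatial and `3` time. -/
abbrev E4 := Fin 4 → ℝ

/-- Partial derivative `∂ₐ f` on `ℝ⁴` (`a = 3` is the time derivative). -/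
def pd4 (a : Fin 4) (f : E4 → ℝ) (x : E4) : ℝ := fderiv ℝ f x (Pi.single a 1)

/-- Cross product on `ℝ³`. -/
def cross3 (a b : Fin 3 → ℝ) : Fin 3 → ℝ :=
  ![a 1 * b 2 - a 2 * b 1, a 2 * b 0 - a 0 * b 2, a 0 * b 1 - a 1 * b 0]

/-- Dot product on `ℝ³`. -/
def dot3 (a b : Fin 3 → ℝ) : ℝ := ∑ i, a i * b i

/-- Spatial curl `∇ × v` of a time-dependent vector field. -/
def curl4 (v : E4 → Fin 3 → ℝ) (x : E4) : Fin 3 → ℝ :=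
  ![pd4 1 (fun y => v y 2) x - pd4 2 (fun y => v y 1) x,
    pd4 2 (fun y => v y 0) x - pd4 0 (fun y => v y 2) x,
    pd4 0 (fun y => v y 1) x - pd4 1 (fun y => v y 0) x]

/-- Spatial divergence `∇ · v`. -/
def div4 (v : E4 → Fin 3 → ℝ) (x : E4) : ℝ :=
  pd4 0 (fun y => v y 0) x + pd4 1 (fun y => v y 1) x + pd4 2 (fun y => v y 2) x

/-- Spatial gradient `∇ f`. -/
def grad4 (f : E4 → ℝ) (x : E4) : Fin 3 → ℝ := ![pd4 0 f x, pd4 1 f x, pd4 2 f x]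

/-- Componentwise spatial Laplacian `∇² v`. -/
def lap4 (v : E4 → Fin 3 → ℝ) (x : E4) (i : Fin 3) : ℝ :=
  pd4 0 (fun y => pd4 0 (fun z => v z i) y) x
    + pd4 1 (fun y => pd4 1 (fun z => v z i) y) x
    + pd4 2 (fun y => pd4 2 (fun z => v z i) y) x

/-- The spatial 1-form `∇φ + v×w − ν∇×w` (with `w = ∇×v`). -/
def aNu (ν : ℝ) (φ : E4 → ℝ) (v : E4 → Fin 3 → ℝ) (x : E4) (i : Fin 3) : ℝ :=
  grad4 φ x i + cross3 (v x) (curl4 v x) i - ν * curl4 (fun y => curl4 v y) x i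

/-- Coefficient matrix of the 2-form
`Ω_ν = −(∇φ + v×w − ν∇×w)·dx∧dt + w·(dx∧dx)` on `I × M`, with `w = ∇×v`:
`(Ω_ν)(e_a, e_b)` for the coordinate frame `(e₀,e₁,e₂,e₃) = (∂ₓ,∂_y,∂_z,∂_t)`. -/
def OmegaNu (ν : ℝ) (φ : E4 → ℝ) (v : E4 → Fin 3 → ℝ) (x : E4) : Fin 4 → Fin 4 → ℝ :=
  ![![0, curl4 v x 2, -(curl4 v x 1), -(aNu ν φ v x 0)],
    ![-(curl4 v x 2), 0, curl4 v x 0, -(aNu ν φ v x 1)],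
    ![curl4 v x 1, -(curl4 v x 0), 0, -(aNu ν φ v x 2)],
    ![aNu ν φ v x 0, aNu ν φ v x 1, aNu ν φ v x 2, 0]]

/-- Potential vorticity `q = w·∇φ`, `w = ∇×v`. -/
def pvort (φ : E4 → ℝ) (v : E4 → Fin 3 → ℝ) (x : E4) : ℝ :=
  dot3 (curl4 v x) (grad4 φ x)

/-- Vortical helicity `𝓗_w = (1/2) w·(∇×w)`, `w = ∇×v`. -/
def Hw (v : E4 → Fin 3 → ℝ) (x : E4) : ℝ :=
  (1 / 2) * dot3 (curl4 v x) (curl4 (fun y => curl4 v y) x)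

/-- Helicity density `𝓗 = (1/2) v·(∇×v)`. -/
def Hel (v : E4 → Fin 3 → ℝ) (x : E4) : ℝ := (1 / 2) * dot3 (v x) (curl4 v x)

/-- Coefficients of the canonical 1-form `θ = −(φ + p + |v|²/2) dt + v·dx`. -/
def thetaF (φ p : E4 → ℝ) (v : E4 → Fin 3 → ℝ) (x : E4) : Fin 4 → ℝ :=
  ![v x 0, v x 1, v x 2, -(φ x + p x + (1 / 2) * dot3 (v x) (v x))]

/-- The suspended velocity field `∂_t + v` on `I × M`. -/
def susp (v : E4 → Fin 3 → ℝ) (x : E4) : Fin 4 → ℝ := ![v x 0, v x 1, v x 2, 1]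

/-- The 1-form `i_{∂_t+v}(Ω_ν)`. -/
def iSuspOmega (ν : ℝ) (φ : E4 → ℝ) (v : E4 → Fin 3 → ℝ) (b : Fin 4) (y : E4) : ℝ :=
  ∑ a, susp v y a * OmegaNu ν φ v y a b

lemma castSucc0 : (0 : Fin 3).castSucc = 0 := rfl
lemma castSucc1 : (1 : Fin 3).castSucc = 1 := rfl
lemma castSucc2 : (2 : Fin 3).castSucc = 2 := rfl
lemma contDiff_pd4 (a : Fin 4) {f : E4 → ℝ} (hf : ContDiff ℝ (⊤ : ℕ∞) f) :
    ContDiff ℝ (⊤ : ℕ∞) (pd4 a f) :=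
  (hf.fderiv_right (by simp)).clm_apply contDiff_const

lemma contDiff_curl4_apply {v : E4 → Fin 3 → ℝ} (hv : ContDiff ℝ (⊤ : ℕ∞) v) (i : Fin 3) :
    ContDiff ℝ (⊤ : ℕ∞) (fun y => curl4 v y i) := by
  fin_cases i <;> simp only [curl4, Matrix.cons_val_zero, Matrix.cons_val_one, Matrix.head_cons,
      Matrix.cons_val_two, Matrix.tail_cons, Fin.mk_zero, Fin.mk_one] <;>
    exact (contDiff_pd4 _ (contDiff_pi.1 hv _)).sub (contDiff_pd4 _ (contDiff_pi.1 hv _))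

lemma contDiff_curl4 {v : E4 → Fin 3 → ℝ} (hv : ContDiff ℝ (⊤ : ℕ∞) v) :
    ContDiff ℝ (⊤ : ℕ∞) (curl4 v) :=
  contDiff_pi.2 (contDiff_curl4_apply hv)

lemma pd4_sub (a : Fin 4) {f g : E4 → ℝ} {x : E4} (hf : DifferentiableAt ℝ f x)
    (hg : DifferentiableAt ℝ g x) :
    pd4 a (fun y => f y - g y) x = pd4 a f x - pd4 a g x := by
  simp [pd4, fderiv_fun_sub hf hg]

lemma pd4_const_mul (a : Fin 4) (c : ℝ) {g : E4 → ℝ} {x : E4} (hg : DifferentiableAt ℝ g x) :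
    pd4 a (fun y => c * g y) x = c * pd4 a g x := by
  simp [pd4, fderiv_const_mul hg c]

lemma pd4_comm {f : E4 → ℝ} (hf : ContDiff ℝ (⊤ : ℕ∞) f) (a b : Fin 4) (x : E4) :
    pd4 a (pd4 b f) x = pd4 b (pd4 a f) x := by
  have hsym : IsSymmSndFDerivAt ℝ f x :=
    hf.contDiffAt.isSymmSndFDerivAt (by rw [minSmoothness_of_isRCLikeNormedField]; exact WithTop.coe_le_coe.2 le_top)
  have hdf : DifferentiableAt ℝ (fderiv ℝ f) x :=
    ((hf.fderiv_right (m := (⊤ : ℕ∞)) (by simp)).differentiable (by simp)) x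
  have key : ∀ c d : Fin 4, pd4 c (pd4 d f) x
      = fderiv ℝ (fderiv ℝ f) x (Pi.single c 1) (Pi.single d 1) := by
    intro c d
    have : pd4 d f = fun y => (fderiv ℝ f y) (Pi.single d 1) := rfl
    rw [show pd4 c (pd4 d f) x = fderiv ℝ (fun y => (fderiv ℝ f y) (Pi.single d 1)) x
        (Pi.single c 1) from rfl]
    rw [fderiv_clm_apply hdf (differentiableAt_const _)]
    simp
  rw [key a b, key b a, hsym]

/-- for `Ω_ν` with `ν ≠ 0` and a velocity field satisfying the
Navier–Stokes equations (vorticity form), with `φ` advected, the 1-form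
`i_{∂_t+v}(Ω_ν) = (∇φ − ν∇×w)·(dx − v dt)` is in general not closed: if
`ν(∇×(∇×w)) ≠ 0` at a point then `d(i_{∂_t+v}Ω_ν) ≠ 0` there, so `∂_t + v`
is not locally Hamiltonian. -/
theorem statement_17 (ν : ℝ) (hν : ν ≠ 0) (φ p : E4 → ℝ) (v : E4 → Fin 3 → ℝ)
    (hv : ContDiff ℝ (⊤ : ℕ∞) v) (hφ : ContDiff ℝ (⊤ : ℕ∞) φ)
    (hdiv : ∀ x, div4 v x = 0)
    (hvort : ∀ (x : E4) (i : Fin 3),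
      pd4 3 (fun y => curl4 v y i) x
        - curl4 (fun y => cross3 (v y) (curl4 v y)) x i
        = ν * lap4 (fun y => curl4 v y) x i)
    (hadv : ∀ x : E4, pd4 3 φ x + dot3 (v x) (grad4 φ x) = 0) :
    (∀ x : E4,
      (∀ i : Fin 3,
        iSuspOmega ν φ v i.castSucc x
          = pd4 i.castSucc φ x - ν * curl4 (fun y => curl4 v y) x i) ∧
      iSuspOmega ν φ v 3 x
        = -dot3 (v x)
            (fun i => grad4 φ x i - ν * curl4 (fun y => curl4 v y) x i)) ∧
    (∀ x : E4,
      (∃ k : Fin 3,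
        ν * curl4 (fun y => curl4 (fun z => curl4 v z) y) x k ≠ 0) →
      ∃ a b : Fin 4,
        pd4 a (iSuspOmega ν φ v b) x - pd4 b (iSuspOmega ν φ v a) x ≠ 0) := by
  have hcc : ContDiff ℝ (⊤ : ℕ∞) (fun y => curl4 (fun z => curl4 v z) y) :=
    contDiff_curl4 (contDiff_curl4 hv)
  have h1 : ∀ (x : E4) (i : Fin 3),
      iSuspOmega ν φ v i.castSucc x
        = pd4 i.castSucc φ x - ν * curl4 (fun y => curl4 v y) x i := by
    intro x i
    fin_cases i <;>
      simp [iSuspOmega, OmegaNu, susp, aNu, cross3, grad4, Fin.sum_univ_four,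
        Fin.isValue, castSucc0, castSucc1, castSucc2] <;> ring
  refine ⟨fun x => ⟨h1 x, ?_⟩, ?_⟩
  · simp [iSuspOmega, OmegaNu, susp, aNu, cross3, grad4, dot3, Fin.sum_univ_four,
      Fin.sum_univ_three]
    ring
  · intro x ⟨k, hk⟩
    -- choose the spatial pair (a, b) matching the curl component k
    have main : ∀ a b : Fin 3,
        pd4 a.castSucc (fun y => curl4 (fun z => curl4 v z) y b) x
          - pd4 b.castSucc (fun y => curl4 (fun z => curl4 v z) y a) x ≠ 0 →
        pd4 a.castSucc (iSuspOmega ν φ v b.castSucc) x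
          - pd4 b.castSucc (iSuspOmega ν φ v a.castSucc) x ≠ 0 := by
      intro a b hab
      have hrw : ∀ j : Fin 3, iSuspOmega ν φ v j.castSucc
          = fun y => pd4 j.castSucc φ y - ν * curl4 (fun z => curl4 v z) y j := by
        intro j; funext y; exact h1 y j
      have hφd : ∀ (c : Fin 4), DifferentiableAt ℝ (pd4 c φ) x := fun c =>
        ((contDiff_pd4 c hφ).differentiable (by simp)) x
      have hgd : ∀ j : Fin 3,
          DifferentiableAt ℝ (fun y => curl4 (fun z => curl4 v z) y j) x := fun j =>
        ((contDiff_curl4_apply (contDiff_curl4 hv) j).differentiable (by simp)) x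
      have expand : ∀ c : Fin 4, ∀ j : Fin 3,
          pd4 c (fun y => pd4 j.castSucc φ y - ν * curl4 (fun z => curl4 v z) y j) x
            = pd4 c (pd4 j.castSucc φ) x
              - ν * pd4 c (fun y => curl4 (fun z => curl4 v z) y j) x := by
        intro c j
        rw [pd4_sub c (hφd _) (((hgd j).const_mul ν : DifferentiableAt ℝ _ x)),
          pd4_const_mul c ν (hgd j)]
      rw [hrw a, hrw b, expand, expand]
      rw [pd4_comm hφ a.castSucc b.castSucc x]
      intro h
      apply hab
      have hν' : ν * (pd4 a.castSucc (fun y => curl4 (fun z => curl4 v z) y b) x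
          - pd4 b.castSucc (fun y => curl4 (fun z => curl4 v z) y a) x) = 0 := by
        linarith
      rcases mul_eq_zero.1 hν' with h' | h'
      · exact absurd h' hν
      · exact h'
    have hk' : curl4 (fun y => curl4 (fun z => curl4 v z) y) x k ≠ 0 :=
      fun h => hk (by rw [h, mul_zero])
    fin_cases k
    · exact ⟨(1 : Fin 3).castSucc, (2 : Fin 3).castSucc, main 1 2 (by
        simpa [curl4, Fin.isValue, castSucc0, castSucc1, castSucc2] using hk')⟩
    · exact ⟨(2 : Fin 3).castSucc, (0 : Fin 3).castSucc, main 2 0 (by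
        simpa [curl4, Fin.isValue, castSucc0, castSucc1, castSucc2] using hk')⟩
    · exact ⟨(0 : Fin 3).castSucc, (1 : Fin 3).castSucc, main 0 1 (by
        simpa [curl4, Fin.isValue, castSucc0, castSucc1, castSucc2] using hk')⟩
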